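/- arXiv:2306.17815 — 2 statements merged into one kernel-verified Lean document; each statement's English description precedes it below -/
import Mathlib

section
/- Suppose the excess violation rate evolves as Δα_{t+1} = Δα_t + η(err_t − α_algo) with err_t ∈ {0,1}, η > 0, 0 ≤ α_algo ≤ 1, Δα_1 < 1, and err_t = 0 whenever Δα_t ≥ 1. Then for all t ≥ 1, Δα_{t+1} < 1 + η(1 − α_algo). -/
/-- Under the recursion with the safety mechanism forcing `err_t = 0`
whenever `Δα_t ≥ 1`, the excess violation rate stays bounded:
`Δα_{t+1} < 1 + η(1 − α_algo)` for all `t ≥ 1`. -/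
theorem excess_violation_rate_bound
    (η αalgo : ℝ) (hη : 0 < η) (hαalgo₀ : 0 ≤ αalgo) (hαalgo₁ : αalgo ≤ 1)
    (err : ℕ → ℝ) (herr : ∀ t, err t = 0 ∨ err t = 1)
    (Δα : ℕ → ℝ) (hinit : Δα 1 < 1)
    (hrec : ∀ t, 1 ≤ t → Δα (t + 1) = Δα t + η * (err t - αalgo))
    (hmech : ∀ t, 1 ≤ t → 1 ≤ Δα t → err t = 0) :
    ∀ t, 1 ≤ t → Δα (t + 1) < 1 + η * (1 - αalgo) := by
  have key : ∀ t, 1 ≤ t → Δα t < 1 + η * (1 - αalgo) := by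
    intro t ht
    induction t with
    | zero => omega
    | succ n ih =>
      rcases Nat.eq_or_lt_of_le ht with h | h
      · have : n + 1 = 1 := h.symm
        rw [this]
        nlinarith
      · have hn : 1 ≤ n := by omega
        have hrecn := hrec n hn
        rcases le_or_gt 1 (Δα n) with hge | hlt
        · have h0 := hmech n hn hge
          rw [hrecn, h0]
          have := ih hn
          nlinarith
        · rw [hrecn]
          rcases herr n with h0 | h1
          · nlinarith [h0]
          · nlinarith [h1]
  intro t ht
  rcases le_or_gt 1 (Δα t) with hge | hlt
  · have h0 := hmech t ht hge
    rw [hrec t ht, h0]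
    have := key t ht
    nlinarith
  · rw [hrec t ht]
    rcases herr t with h0 | h1 <;> [nlinarith [h0]; nlinarith [h1]]
end

section
/- Suppose Δα_{t+1} = Δα_t + η(err_t − α_algo) with err_t ∈ {0,1}, η > 0, α_algo ∈ [0,1], Δα_1 < 1, and err_t = 0 whenever Δα_t ≥ 1. If α_algo = (1/(T−1))(Tα − 1 − 1/η + Δα_1/η) for some T ≥ 2 and α ∈ (0,1], then (1/T)∑_{t=1}^T err_t ≤ α. -/
/-- With the algorithmic target level
`α_algo = (Tα − 1 − 1/η + Δα_1/η)/(T−1)`, the violation rate is at most `α`. -/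
theorem violation_rate_meets_target
    (η αalgo Δα₁ α : ℝ) (hη : 0 < η)
    (T : ℕ) (hT : 2 ≤ T)
    (hα₀ : 0 < α) (hα₁ : α ≤ 1)
    (hαalgo₀ : 0 ≤ αalgo) (hαalgo₁ : αalgo ≤ 1)
    (hαalgo : αalgo = ((T : ℝ) * α - 1 - 1 / η + Δα₁ / η) / ((T : ℝ) - 1))
    (err : ℕ → ℝ) (herr : ∀ t, err t = 0 ∨ err t = 1)
    (Δα : ℕ → ℝ) (hinit : Δα 1 = Δα₁) (hinit' : Δα₁ < 1)
    (hrec : ∀ t, 1 ≤ t → Δα (t + 1) = Δα t + η * (err t - αalgo))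
    (hmech : ∀ t, 1 ≤ t → 1 ≤ Δα t → err t = 0) :
    (1 / (T : ℝ)) * ∑ t ∈ Finset.Icc 1 T, err t ≤ α := by
  have hTpos : (0:ℝ) < (T:ℝ) := by positivity
  have hT1 : (0:ℝ) < (T:ℝ) - 1 := by
    have : (2:ℝ) ≤ (T:ℝ) := by exact_mod_cast hT
    linarith
  -- invariant: Δα t ≤ 1 + η*(1 - αalgo) for all t ≥ 1
  have hbound : ∀ t, 1 ≤ t → Δα t ≤ 1 + η * (1 - αalgo) := by
    intro t ht
    induction t with
    | zero => omega
    | succ n ih =>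
      rcases Nat.eq_or_lt_of_le ht with h | h
      · simp [← h, hinit]
        nlinarith
      · have hn : 1 ≤ n := by omega
        have hIH := ih hn
        rw [hrec n hn]
        rcases lt_or_ge (Δα n) 1 with hc | hc
        · rcases herr n with he | he <;> rw [he] <;> nlinarith
        · rw [hmech n hn hc]
          nlinarith
  -- telescoping identity
  have hsum : ∀ n, 1 ≤ n →
      Δα (n + 1) = Δα₁ + η * ((∑ t ∈ Finset.Icc 1 n, err t) - (n:ℝ) * αalgo) := by
    intro n hn
    induction n with
    | zero => omega
    | succ m ih =>
      rcases Nat.eq_or_lt_of_le hn with h | h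
      · rw [← h]
        simp [hrec 1 le_rfl, hinit]
      · have hm : 1 ≤ m := by omega
        rw [hrec (m+1) (by omega), ih hm,
          Finset.sum_Icc_succ_top (by omega : 1 ≤ m + 1)]
        push_cast
        ring
  have hkey := hsum T (by omega)
  have hB := hbound (T + 1) (by omega)
  -- from hαalgo: (T-1)*αalgo = T*α - 1 - 1/η + Δα₁/η
  have halg : ((T:ℝ) - 1) * αalgo = (T:ℝ) * α - 1 - 1/η + Δα₁/η := by
    rw [hαalgo]; field_simp
  have hS : (∑ t ∈ Finset.Icc 1 T, err t) ≤ (T:ℝ) * α := by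
    have h1 : Δα₁ + η * ((∑ t ∈ Finset.Icc 1 T, err t) - (T:ℝ) * αalgo)
        ≤ 1 + η * (1 - αalgo) := by rw [← hkey]; exact hB
    have h2 : η * (((T:ℝ) - 1) * αalgo) = η * ((T:ℝ) * α) - η - 1 + Δα₁ := by
      rw [halg]; field_simp
    have h3 : η * (∑ t ∈ Finset.Icc 1 T, err t) ≤ η * ((T:ℝ) * α) := by nlinarith
    exact le_of_mul_le_mul_left h3 hη
  rw [div_mul_eq_mul_div, one_mul, div_le_iff₀ hTpos]
  linarith
end
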